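/- arXiv:2201.13364 — 2 statements merged into one kernel-verified Lean document; each statement's English description precedes it below -/
import Mathlib

section
/- Let p ∈ ℕ[t] be a polynomial of degree d ≥ 1 with non-zero constant coefficient. Then p^d has large middle coefficients: p^d has degree d², its constant and leading coefficients are non-zero, and the coefficient of t^j in p^d is different from 1 for every j with 0 < j < d². -/
/-! The coefficient of `t^j` in `p^n` is the sum, over the `n`-tuples of exponents summing to `j`,
of the products of the corresponding coefficients of `p`. In `ℕ` it can only be `1` if exactly
one tuple has all its exponents in the support of `p`. That tuple is then invariant under
permutations, hence constant equal to some `k` with `j = k n` and `0 < k < n`; but the tuple with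
`k` entries `n` and `n - k` entries `0` contributes as well, since `p.coeff 0` and `p.coeff n`
are non-zero. -/

open Polynomial Finset

theorem Finset.comp_perm_mem_piAntidiag_univ {ι μ : Type*} [Fintype ι] [DecidableEq ι]
    [AddCommMonoid μ] [HasAntidiagonal μ] [DecidableEq μ] {f : ι → μ} {j : μ} (σ : Equiv.Perm ι)
    (hf : f ∈ piAntidiag univ j) : f ∘ σ ∈ piAntidiag univ j := by
  simpa [Equiv.sum_comp] using hf

namespace Polynomial

theorem coeff_pow_eq_sum_piAntidiag {R : Type*} [CommSemiring R] (p : R[X]) (n j : ℕ) :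
    (p ^ n).coeff j = ∑ f ∈ piAntidiag (univ : Finset (Fin n)) j, ∏ i, p.coeff (f i) := by
  rw [← coeff_coe, coe_pow, ← Fin.prod_const, PowerSeries.coeff_prod]
  exact sum_equiv Finsupp.equivFunOnFinite (by simp) (by simp)

theorem exists_mem_piAntidiag_of_coeff_pow_ne_zero {R : Type*} [CommSemiring R] {p : R[X]}
    {n j : ℕ} (h : (p ^ n).coeff j ≠ 0) :
    ∃ f ∈ piAntidiag (univ : Finset (Fin n)) j, ∀ i, p.coeff (f i) ≠ 0 := by
  contrapose! h
  rw [coeff_pow_eq_sum_piAntidiag]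
  refine sum_eq_zero fun f hf => ?_
  obtain ⟨i, hi⟩ := h f hf
  exact prod_eq_zero (mem_univ i) hi

theorem two_le_coeff_pow_of_ne {p : ℕ[X]} {n j : ℕ} {f g : Fin n → ℕ}
    (hf : f ∈ piAntidiag univ j) (hg : g ∈ piAntidiag univ j)
    (hfp : ∀ i, p.coeff (f i) ≠ 0) (hgp : ∀ i, p.coeff (g i) ≠ 0) (hfg : f ≠ g) :
    2 ≤ (p ^ n).coeff j := by
  rw [coeff_pow_eq_sum_piAntidiag]
  calc 2 = 1 + 1 := rfl
    _ ≤ ∏ i, p.coeff (f i) + ∏ i, p.coeff (g i) := by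
      gcongr <;> exact Nat.one_le_iff_ne_zero.mpr (prod_ne_zero_iff.mpr fun i _ => by simp [*])
    _ ≤ _ := add_le_sum (f := fun l => ∏ i, p.coeff (l i)) (fun _ _ => Nat.zero_le _) hf hg hfg

theorem coeff_pow_ne_one {p : ℕ[X]} {n j : ℕ} (h0 : p.coeff 0 ≠ 0) (hn : p.coeff n ≠ 0)
    (hj0 : 0 < j) (hjn : j < n * n) : (p ^ n).coeff j ≠ 1 := by
  intro h1
  obtain ⟨f, hf, hfp⟩ := exists_mem_piAntidiag_of_coeff_pow_ne_zero (h1 ▸ one_ne_zero)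
  have eq_f : ∀ g ∈ piAntidiag univ j, (∀ i, p.coeff (g i) ≠ 0) → g = f := fun g hg hgp =>
    by_contra fun hgf => by have := two_le_coeff_pow_of_ne hg hf hgp hfp hgf; omega
  have hn0 : 0 < n := Nat.pos_of_mul_pos_left (hj0.trans hjn)
  set k := f ⟨0, hn0⟩
  have f_const : ∀ i, f i = k := fun i => by
    have := eq_f (f ∘ Equiv.swap i ⟨0, hn0⟩) (comp_perm_mem_piAntidiag_univ _ hf) fun _ => hfp _
    simpa using (congrFun this i).symm
  have hj : j = k * n := by
    rw [← (mem_piAntidiag.mp hf).1, sum_congr rfl fun i _ => f_const i, sum_const, card_univ,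
      Fintype.card_fin, smul_eq_mul, mul_comm]
  have hk : k < n := by nlinarith
  set g : Fin n → ℕ := fun i => if (i : ℕ) < k then n else 0
  have hg : g ∈ piAntidiag univ j := by
    simp [g, hj, sum_ite, Fin.card_filter_val_lt, hk.le]
  have hk0 : 0 < k := Nat.pos_of_mul_pos_right (hj ▸ hj0)
  have hgk : g ⟨0, hn0⟩ ≠ k := by simp [g, hk0, hk.ne']
  have hgf : g = f := eq_f g hg fun i => by simp only [g]; split_ifs <;> assumption
  exact hgk (by rw [hgf])

end Polynomial

theorem pow_natDegree_large_middle_coefficients_general (p : Polynomial ℕ)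
    (h0 : p.coeff 0 ≠ 0) :
    (p ^ p.natDegree).natDegree = p.natDegree * p.natDegree ∧
    (p ^ p.natDegree).coeff 0 ≠ 0 ∧
    (p ^ p.natDegree).coeff (p.natDegree * p.natDegree) ≠ 0 ∧
    ∀ j : ℕ, 0 < j → j < p.natDegree * p.natDegree → (p ^ p.natDegree).coeff j ≠ 1 := by
  have hlead : p.leadingCoeff ≠ 0 := leadingCoeff_ne_zero.mpr fun h => h0 (by simp [h])
  refine ⟨natDegree_pow p _, ?_, ?_, fun j hj0 hjd => coeff_pow_ne_one h0 hlead hj0 hjd⟩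
  · rw [← constantCoeff_apply, map_pow]
    exact pow_ne_zero _ h0
  · rw [coeff_pow_of_natDegree_le le_rfl]
    exact pow_ne_zero _ hlead

/-- For any polynomial `p ∈ ℕ[t]` of degree `d ≥ 1` with non-zero constant term,
`p^d` has large middle coefficients: its degree is `d²`, its constant and leading
coefficients are non-zero, and all middle coefficients are different from `1`. -/
theorem pow_natDegree_large_middle_coefficients (p : Polynomial ℕ)
    (hd : 1 ≤ p.natDegree) (h0 : p.coeff 0 ≠ 0) :
    (p ^ p.natDegree).natDegree = p.natDegree * p.natDegree ∧
    (p ^ p.natDegree).coeff 0 ≠ 0 ∧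
    (p ^ p.natDegree).coeff (p.natDegree * p.natDegree) ≠ 0 ∧
    ∀ j : ℕ, 0 < j → j < p.natDegree * p.natDegree → (p ^ p.natDegree).coeff j ≠ 1 :=
  pow_natDegree_large_middle_coefficients_general p h0
end

section
/- Let p ∈ ℕ[t] be a polynomial with non-zero constant coefficient and let m ∈ ℕ. For ℓ ∈ ℕ, the coefficient of t^ℓ in p^m is non-zero if and only if ℓ can be written as ℓ = Σ_i x_i · i, where (x_i)_{i ∈ ℕ} is a finitely supported family of natural numbers such that x_i = 0 whenever p.coeff i = 0 and Σ_i x_i ≤ m. -/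
/-!
Over a canonically ordered semiring without zero divisors no cancellation can occur, so the
coefficient of `t^ℓ` in `p^m` is non-zero exactly when `ℓ` is a sum of `m` exponents from the
support of `p`, counted with multiplicity. When `p.coeff 0 ≠ 0`, the exponent `0` may be used as
padding, which turns "exactly `m`" into "at most `m`". Recording the multiplicities of a multiset
of exponents as a finitely supported function gives the statement.
-/

open Polynomial

namespace Polynomial

variable {R : Type*} [CommSemiring R] [PartialOrder R] [CanonicallyOrderedAdd R]
  [NoZeroDivisors R]

theorem coeff_mul_ne_zero_iff {p q : R[X]} {n : ℕ} :
    (p * q).coeff n ≠ 0 ↔ ∃ a b, a + b = n ∧ p.coeff a ≠ 0 ∧ q.coeff b ≠ 0 := by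
  simp [coeff_mul, Finset.sum_eq_zero_iff]

theorem coeff_pow_ne_zero_iff [Nontrivial R] {p : R[X]} {m ℓ : ℕ} :
    (p ^ m).coeff ℓ ≠ 0 ↔
      ∃ s : Multiset ℕ, Multiset.card s = m ∧ (∀ i ∈ s, p.coeff i ≠ 0) ∧ s.sum = ℓ := by
  induction m generalizing ℓ with
  | zero => simp [coeff_one, eq_comm]
  | succ m ih =>
    simp only [pow_succ, coeff_mul_ne_zero_iff, ih, Multiset.card_eq_succ_iff]
    constructor
    · rintro ⟨_, a, rfl, ⟨s, rfl, hs, rfl⟩, ha⟩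
      exact ⟨a ::ₘ s, ⟨a, s, rfl, rfl⟩, by simpa [ha] using hs, by simp [add_comm]⟩
    · rintro ⟨_, ⟨a, s, rfl, rfl⟩, hs, rfl⟩
      simp only [Multiset.mem_cons, forall_eq_or_imp] at hs
      exact ⟨s.sum, a, by simp [add_comm], ⟨s, rfl, hs.2, rfl⟩, hs.1⟩

theorem coeff_pow_ne_zero_iff_of_coeff_zero_ne_zero [Nontrivial R] {p : R[X]}
    (h0 : p.coeff 0 ≠ 0) {m ℓ : ℕ} :
    (p ^ m).coeff ℓ ≠ 0 ↔
      ∃ s : Multiset ℕ, Multiset.card s ≤ m ∧ (∀ i ∈ s, p.coeff i ≠ 0) ∧ s.sum = ℓ := by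
  rw [coeff_pow_ne_zero_iff]
  constructor
  · rintro ⟨s, hcard, hs, hsum⟩
    exact ⟨s, hcard.le, hs, hsum⟩
  · rintro ⟨s, hcard, hs, rfl⟩
    refine ⟨s + Multiset.replicate (m - Multiset.card s) 0, by simp; omega, ?_, by simp⟩
    simp only [Multiset.mem_add, Multiset.mem_replicate]
    rintro i (hi | ⟨-, rfl⟩)
    exacts [hs i hi, h0]

end Polynomial

/-- For `p ∈ ℕ[t]` with non-zero constant term, the coefficient of `t^ℓ` in `p^m` is
non-zero if and only if `ℓ = Σ_i x_i · i` for a finitely supported family `x : ℕ →₀ ℕ`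
supported on the support of `p` with `Σ_i x_i ≤ m`. -/
theorem pow_coeff_ne_zero_iff (p : Polynomial ℕ) (h0 : p.coeff 0 ≠ 0) (m ℓ : ℕ) :
    (p ^ m).coeff ℓ ≠ 0 ↔
      ∃ x : ℕ →₀ ℕ,
        (∀ i : ℕ, p.coeff i = 0 → x i = 0) ∧
        (x.sum fun _ v => v) ≤ m ∧
        ℓ = x.sum fun i v => v * i := by
  have toMultiset_surjective : Function.Surjective (Finsupp.toMultiset (α := ℕ)) :=
    fun s => ⟨_, Multiset.toFinsupp_toMultiset s⟩
  rw [coeff_pow_ne_zero_iff_of_coeff_zero_ne_zero h0]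
  refine toMultiset_surjective.exists.trans (exists_congr fun x => ?_)
  have support_iff : (∀ i ∈ Finsupp.toMultiset x, p.coeff i ≠ 0) ↔
      ∀ i, p.coeff i = 0 → x i = 0 := by
    simp only [Finsupp.mem_toMultiset, Finsupp.mem_support_iff]
    exact forall_congr' fun i => not_imp_not
  rw [support_iff, Finsupp.card_toMultiset, Finsupp.sum_toMultiset, eq_comm]
  exact and_left_comm
end
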